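/- arXiv:1608.01408 — 5 statements merged into one kernel-verified Lean document; each statement's English description precedes it below -/
import Mathlib

section
/- If a is a vector in the nullspace of the m×(m+1) matrix with rows (1, α_i, α_i², ..., α_i^m) for distinct positive reals α₁,...,α_m, and some coordinate of a is zero, then a is the zero vector. -/
open Polynomial in
/-- If a is in the nullspace of the m×(m+1) matrix with rows
(1, α_i, ..., α_i^m) for distinct positive reals α_i, and some coordinate
of a is zero, then a = 0. -/
theorem stmt_1 (m : ℕ) (α : Fin m → ℝ) (hpos : ∀ i, 0 < α i)
    (hdist : Function.Injective α) (a : Fin (m + 1) → ℝ)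
    (hnull : ∀ i : Fin m, ∑ j : Fin (m + 1), a j * α i ^ (j : ℕ) = 0)
    (hzero : ∃ i : Fin (m + 1), a i = 0) :
    a = 0 := by
  classical
  set P : ℝ[X] := ∑ j : Fin (m + 1), C (a j) * X ^ (j : ℕ) with hPdef
  have hcoeff : ∀ j : Fin (m + 1), P.coeff j = a j := by
    intro j
    rw [hPdef, Polynomial.finset_sum_coeff]
    rw [Finset.sum_eq_single j]
    · simp
    · intro b _ hb
      rw [Polynomial.coeff_C_mul, Polynomial.coeff_X_pow,
        if_neg (fun h => hb (Fin.ext h.symm)), mul_zero]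
    · intro h; exact absurd (Finset.mem_univ j) h
  have heval : ∀ i : Fin m, P.eval (α i) = 0 := by
    intro i
    rw [hPdef, Polynomial.eval_finset_sum]
    simp only [Polynomial.eval_mul, Polynomial.eval_C, Polynomial.eval_pow, Polynomial.eval_X]
    exact hnull i
  have hdeg : P.natDegree ≤ m := by
    apply Polynomial.natDegree_sum_le_of_forall_le
    intro j _
    refine le_trans (Polynomial.natDegree_C_mul_le _ _) ?_
    simpa using Nat.lt_succ_iff.mp j.2
  -- the multiset of roots
  set s : Multiset ℝ := Finset.univ.val.map α with hsdef
  have hscard : Multiset.card s = m := by simp [hsdef]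
  have hsnodup : s.Nodup := Multiset.Nodup.map hdist Finset.univ.nodup
  have hP0 : P = 0 := by
    by_contra hP0
    have hle : s ≤ P.roots := by
      rw [Multiset.le_iff_subset hsnodup]
      intro x hx
      obtain ⟨i, _, rfl⟩ := Multiset.mem_map.mp hx
      rw [Polynomial.mem_roots hP0]
      exact heval i
    have hdvd : (s.map fun t => X - C t).prod ∣ P :=
      (Multiset.prod_X_sub_C_dvd_iff_le_roots hP0 s).mpr hle
    obtain ⟨R, hR⟩ := hdvd
    set Q : ℝ[X] := (s.map fun t => X - C t).prod with hQdef
    have hQdeg : Q.natDegree = m := by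
      rw [hQdef, Polynomial.natDegree_multiset_prod_X_sub_C_eq_card, hscard]
    have hQ0 : Q ≠ 0 := by
      intro h
      rw [h, zero_mul] at hR
      exact hP0 hR
    have hR0 : R ≠ 0 := by
      intro h
      rw [h, mul_zero] at hR
      exact hP0 hR
    have hRdeg : R.natDegree = 0 := by
      have := Polynomial.natDegree_mul hQ0 hR0
      rw [← hR] at this
      omega
    obtain ⟨c, rfl⟩ := Polynomial.natDegree_eq_zero.mp hRdeg
    obtain ⟨i0, hi0⟩ := hzero
    have hQc : Q.coeff i0 ≠ 0 := by
      have hk : (i0 : ℕ) ≤ Multiset.card s := by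
        rw [hscard]; exact Nat.lt_succ_iff.mp i0.2
      rw [hQdef, Multiset.prod_X_sub_C_coeff s hk]
      have hesymm : 0 < s.esymm (Multiset.card s - i0) := by
        rw [hsdef, Finset.esymm_map_val]
        apply Finset.sum_pos
        · intro t ht
          exact Finset.prod_pos fun i _ => hpos i
        · apply Finset.powersetCard_nonempty_of_le
          simp only [Multiset.card_map, Finset.card_univ, Fintype.card_fin, Finset.card]
          exact Nat.sub_le _ _
      positivity
    have hc : c = 0 := by
      have : a i0 = Q.coeff i0 * c := by
        rw [← hcoeff i0, hR, Polynomial.coeff_mul_C]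
      rw [hi0] at this
      rcases mul_eq_zero.mp this.symm with h | h
      · exact absurd h hQc
      · exact h
    rw [hc, map_zero, mul_zero] at hR
    exact hP0 hR
  funext j
  have := hcoeff j
  rw [hP0] at this
  simpa using this.symm
end

section
/- For any T ≥ 1 and N ≥ T there exist distinct positive integers α₁, ..., α_T such that the N×(N-T) matrix A, whose first N-T rows form the identity matrix and whose row N-T+t (for t = 1,...,T) is (α_t, α_t², ..., α_t^{N-T}), has the property that every (N-T)×(N-T) submatrix of A is nonsingular. -/
/-!
Any distinct positive `α` work, e.g. `α t = t + 1`. If `v` is in the kernel of a square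
submatrix, the chosen identity rows force the corresponding coordinates of `v` to vanish, so
`∑ⱼ vⱼ X ^ (j + 1)` has at most `m` nonzero coefficients, `m` being the number of chosen
power rows; but it vanishes at the `m` distinct positive `α`'s of those rows, while by
Descartes' rule of signs it has fewer positive roots than nonzero coefficients. Hence `v = 0`.
-/

open Finset Polynomial Matrix

namespace Polynomial

variable {R : Type*}

theorem signVariations_lt_card_support [Semiring R] [LinearOrder R] {P : R[X]} (hP : P ≠ 0) :
    signVariations P < #P.support := by
  induction hn : #P.support generalizing P with
  | zero => exact absurd (card_support_eq_zero.mp hn) hP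
  | succ n ih =>
    by_cases hE : P.eraseLead = 0
    · rw [← eraseLead_add_monomial_natDegree_leadingCoeff P, hE, zero_add,
        signVariations_monomial]
      omega
    · have := ih hE (card_support_eraseLead' hn)
      have := signVariations_le_eraseLead_succ P
      omega

variable [CommRing R] [LinearOrder R] [IsStrictOrderedRing R]

theorem card_lt_card_support_of_forall_isRoot {P : R[X]} (hP : P ≠ 0) {S : Finset R}
    (hpos : ∀ x ∈ S, 0 < x) (hroot : ∀ x ∈ S, P.IsRoot x) : #S < #P.support := by
  have hS : S.val ≤ P.roots.filter (0 < ·) :=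
    (Multiset.le_iff_subset S.nodup).mpr fun x hx =>
      Multiset.mem_filter.mpr ⟨(mem_roots hP).mpr (hroot x hx), hpos x hx⟩
  calc #S ≤ P.roots.countP (0 < ·) := by
        rw [Multiset.countP_eq_card_filter]
        exact Multiset.card_le_card hS
    _ ≤ signVariations P := roots_countP_pos_le_signVariations P
    _ < #P.support := signVariations_lt_card_support hP

end Polynomial

section

variable {R κ τ : Type*} [CommRing R] [LinearOrder R] [IsStrictOrderedRing R] [Fintype κ]

theorem card_lt_card_ne_zero_of_forall_sum_mul_pow_eq_zero {d : κ → ℕ}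
    (hd : Function.Injective d) {v : κ → R} (hv : v ≠ 0) {S : Finset R}
    (hpos : ∀ x ∈ S, 0 < x) (hzero : ∀ x ∈ S, ∑ j, x ^ d j * v j = 0) :
    #S < #{j | v j ≠ 0} := by
  set P : R[X] := ∑ j, monomial (d j) (v j)
  have hcoeff (n : ℕ) : P.coeff n = ∑ j, if d j = n then v j else 0 := by
    simp only [P, finsetSum_coeff, coeff_monomial]
  obtain ⟨j₀, hj₀⟩ := Function.ne_iff.mp hv
  have hP : P ≠ 0 := by
    refine ne_of_apply_ne (coeff · (d j₀)) ?_
    rw [hcoeff, Finset.sum_eq_single j₀ (fun j _ hj => if_neg (hd.ne hj)) (by simp)]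
    simpa using hj₀
  have hsupp : P.support ⊆ ({j | v j ≠ 0} : Finset κ).image d := by
    intro n hn
    rw [mem_support_iff, hcoeff] at hn
    obtain ⟨j, -, hj⟩ := Finset.exists_ne_zero_of_sum_ne_zero hn
    by_cases h : d j = n
    · rw [if_pos h] at hj
      exact mem_image.mpr ⟨j, by simpa using hj, h⟩
    · exact absurd (if_neg h) hj
  calc #S < #P.support := card_lt_card_support_of_forall_isRoot hP hpos fun x hx => by
        simpa [P, eval_finsetSum, mul_comm] using hzero x hx
    _ ≤ #{j | v j ≠ 0} := (card_le_card hsupp).trans card_image_le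

theorem det_submatrix_fromRows_one_pow_ne_zero [DecidableEq κ] {α : τ → R}
    (hα : Function.Injective α) (hpos : ∀ t, 0 < α t) {d : κ → ℕ} (hd : Function.Injective d)
    {e : κ → κ ⊕ τ} (he : Function.Injective e) :
    ((fromRows (1 : Matrix κ κ R) (of fun t j => α t ^ d j)).submatrix e id).det ≠ 0 := by
  intro hdet
  obtain ⟨v, hv, hMv⟩ := exists_mulVec_eq_zero_iff.mpr hdet
  set E := univ.map ⟨e, he⟩
  have hrow : ∀ r ∈ E, Sum.elim v (fun t => ∑ j, α t ^ d j * v j) r = 0 := by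
    intro r hr
    obtain ⟨i, -, rfl⟩ := mem_map.mp hr
    have : (fromRows 1 (of fun t j => α t ^ d j) *ᵥ v) (e i) = 0 := congrFun hMv i
    rwa [fromRows_mulVec, one_mulVec] at this
  have hleft : ∀ c ∈ E.toLeft, v c = 0 := fun c hc => hrow _ (mem_toLeft.mp hc)
  have hright : ∀ t ∈ E.toRight, ∑ j, α t ^ d j * v j = 0 := fun t ht =>
    hrow _ (mem_toRight.mp ht)
  have hcard : #E.toLeft + #E.toRight = Fintype.card κ := by
    rw [card_toLeft_add_card_toRight, card_map, card_univ]
  have hsupp : #{j | v j ≠ 0} ≤ #E.toRight := by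
    have : ({j | v j ≠ 0} : Finset κ) ⊆ E.toLeftᶜ := fun j hj =>
      mem_compl.mpr fun hjE => (mem_filter.mp hj).2 (hleft j hjE)
    have := card_le_card this
    rw [card_compl] at this
    omega
  have := card_lt_card_ne_zero_of_forall_sum_mul_pow_eq_zero hd hv
    (S := E.toRight.map ⟨α, hα⟩) (by simpa using fun t _ => hpos t) (by simpa using hright)
  rw [card_map] at this
  omega

end

/-- For T ≥ 1 and N ≥ T there exist distinct positive integers
α₁,...,α_T such that the N×(N-T) matrix whose top (N-T)×(N-T) block is the
identity and whose row N-T+t is (α_t, α_t², ..., α_t^{N-T}) has every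
(N-T)×(N-T) submatrix nonsingular. -/
theorem stmt_5 (N T : ℕ) :
    ∃ α : Fin T → ℕ, Function.Injective α ∧ (∀ t, 0 < α t) ∧
      ∀ e : Fin (N - T) → Fin N, Function.Injective e →
        (Matrix.of fun i j : Fin (N - T) =>
          (fun (r : Fin N) (c : Fin (N - T)) =>
            if h : (r : ℕ) < N - T then (if (r : ℕ) = (c : ℕ) then (1 : ℚ) else 0)
            else ((α ⟨(r : ℕ) - (N - T), by have := r.isLt; omega⟩ : ℚ)) ^ ((c : ℕ) + 1))
          (e i) j).det ≠ 0 := by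
  have hsucc : Function.Injective fun t : Fin T => (t : ℕ) + 1 :=
    (add_left_injective 1).comp Fin.val_injective
  refine ⟨fun t => (t : ℕ) + 1, hsucc, fun t => t.succ_pos, fun e he => ?_⟩
  let rowBlock (r : Fin N) : Fin (N - T) ⊕ Fin T :=
    if h : (r : ℕ) < N - T then .inl ⟨r, h⟩ else .inr ⟨r - (N - T), by omega⟩
  have hrowBlock : Function.Injective rowBlock := by
    intro r s h
    simp only [rowBlock] at h
    split_ifs at h <;> simp [Fin.ext_iff] at h ⊢ <;> omega
  convert det_submatrix_fromRows_one_pow_ne_zero (R := ℚ)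
    (Nat.cast_injective.comp hsucc) (fun t => Nat.cast_pos.mpr t.succ_pos)
    (d := fun j : Fin (N - T) => (j : ℕ) + 1) ((add_left_injective 1).comp Fin.val_injective)
    (hrowBlock.comp he) using 2
  ext i j
  simp only [rowBlock, Function.comp_apply, submatrix_apply, of_apply, id]
  split_ifs <;> simp [Fin.ext_iff, *]
end

section
/- Let G = (V, E) be a finite undirected graph with N vertices in which every vertex has a self-loop, let 1 ≤ T with N ≥ T + ⌊T²/4⌋ + 2, let V' be the set of vertices contained in some clique of size at least N-T, and suppose V' is nonempty. Let V* = {v ∈ V' : (v, w) ∈ E for all w ∈ V'}. Then |V*| ≥ N - F(T), where F(T) = T + ⌊T²/4⌋ + 1. -/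
open Finset

private lemma arith_key (T f a x n w1 K : ℕ) (h1 : x + w1 ≤ a + 2*n) (h2 : 2*n ≤ x)
    (h3 : f + a + x ≤ T) (h4 : w1 ≤ a) (h5 : w1 = 0 ∨ f + a + n + K ≤ T) :
    4*(f + 2*a + x + w1*K) ≤ (T+2)^2 := by
  rcases h5 with h5 | h5
  · subst h5; zify at *; nlinarith [sq_nonneg ((T:ℤ) - 2)]
  · rcases Nat.eq_zero_or_pos K with hK | hK
    · subst hK; zify at *; nlinarith [sq_nonneg ((T:ℤ) - 2)]
    · rcases Nat.lt_or_ge a 2 with ha | ha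
      · interval_cases a <;> interval_cases w1 <;> zify at * <;>
          nlinarith [sq_nonneg ((T:ℤ) - 2), sq_nonneg ((T:ℤ) - 1), h2, h3, h5]
      · zify at *
        have hw : (w1:ℤ) * K ≤ ((a:ℤ) + 2*n - x) * K := by
          apply mul_le_mul_of_nonneg_right _ (by positivity); omega
        have hx : 2*(n:ℤ)*((K:ℤ)-1) ≤ (x:ℤ) * ((K:ℤ) - 1) := by
          apply mul_le_mul_of_nonneg_right _ (by omega); omega
        nlinarith [sq_nonneg ((T:ℤ) - f + 2 - 2*a),
          mul_nonneg (by omega : (0:ℤ) ≤ (n:ℤ)) (by omega : (0:ℤ) ≤ (a:ℤ) - 2),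
          mul_nonneg (by omega : (0:ℤ) ≤ (f:ℤ)) (by omega : (0:ℤ) ≤ (T:ℤ) - f)]

/-- In a graph on N vertices (all with self-loops) with
1 ≤ T and N ≥ T + ⌊T²/4⌋ + 2, if V' is the (nonempty) set of vertices in
some clique of size ≥ N-T, then V* = {v ∈ V' : v adjacent to all of V'}
satisfies |V*| ≥ N - F(T), F(T) = T + ⌊T²/4⌋ + 1. -/
theorem stmt_6 {V : Type*} [Fintype V] [DecidableEq V] (G : SimpleGraph V)
    (N T : ℕ) (hcard : Fintype.card V = N) (hT : 1 ≤ T)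
    (hNT : T + T ^ 2 / 4 + 2 ≤ N)
    (V' : Set V)
    (hV' : V' = {v : V | ∃ s : Finset V, G.IsClique (s : Set V) ∧ N - T ≤ s.card ∧ v ∈ s})
    (hne : V'.Nonempty)
    (Vstar : Set V)
    (hVstar : Vstar = {v ∈ V' | ∀ w ∈ V', w = v ∨ G.Adj v w}) :
    N - (T + T ^ 2 / 4 + 1) ≤ Vstar.ncard := by
  classical
  -- non-adjacency relation
  set H : V → V → Prop := fun u v => u ≠ v ∧ ¬ G.Adj u v with hHdef
  have hsym : ∀ u v, H u v → H v u := by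
    rintro u v ⟨h1, h2⟩; exact ⟨h1.symm, fun h => h2 h.symm⟩
  have hirr : ∀ u v, H u v → u ≠ v := fun u v h => h.1
  -- covers
  set Cov : Finset V → Prop := fun S => ∀ u v, H u v → u ∈ S ∨ v ∈ S with hCovdef
  set SC : Finset V → Prop := fun S => Cov S ∧ S.card ≤ T with hSCdef
  have hNV : Fintype.card V = N := hcard
  -- characterization of V'
  have hV'iff : ∀ v : V, v ∈ V' ↔ ∃ S, SC S ∧ v ∉ S := by
    intro v
    rw [hV']
    constructor
    · rintro ⟨s, hcl, hsz, hvs⟩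
      refine ⟨sᶜ, ⟨?_, ?_⟩, by simp [hvs]⟩
      · rintro u w ⟨huw, hnadj⟩
        by_contra hcon
        push_neg at hcon
        obtain ⟨hu, hw⟩ := hcon
        simp only [Finset.mem_compl, not_not] at hu hw
        exact hnadj (hcl (by simpa using hu) (by simpa using hw) huw)
      · have h1 : s.card ≤ N := hNV ▸ s.card_le_univ
        have : sᶜ.card = N - s.card := by rw [Finset.card_compl, hNV]
        omega
    · rintro ⟨S, ⟨hScov, hST⟩, hvS⟩
      refine ⟨Sᶜ, ?_, ?_, by simpa using hvS⟩
      · intro u hu w hw huw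
        simp only [Finset.coe_compl, Set.mem_compl_iff, Finset.mem_coe] at hu hw
        by_contra hnadj
        rcases hScov u w ⟨huw, hnadj⟩ with h | h
        · exact hu h
        · exact hw h
      · have : Sᶜ.card = N - S.card := by rw [Finset.card_compl, hNV]
        omega
  -- a minimum (global) cover S₀
  have hfamne : ((univ : Finset (Finset V)).filter Cov).Nonempty := by
    refine ⟨univ, ?_⟩
    simp only [Finset.mem_filter, Finset.mem_univ, true_and]
    exact fun u v _ => Or.inl (Finset.mem_univ u)
  obtain ⟨S₀, hS₀mem, hS₀min'⟩ :=
    Finset.exists_min_image ((univ : Finset (Finset V)).filter Cov) Finset.card hfamne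
  have hS₀cov : Cov S₀ := (Finset.mem_filter.mp hS₀mem).2
  have hS₀min : ∀ S, Cov S → S₀.card ≤ S.card := by
    intro S hS
    exact hS₀min' S (Finset.mem_filter.mpr ⟨Finset.mem_univ _, hS⟩)
  have hS₀T : S₀.card ≤ T := by
    obtain ⟨v₀, hv₀⟩ := hne
    obtain ⟨S₁, ⟨hc, hT1⟩, -⟩ := (hV'iff v₀).mp hv₀
    exact le_trans (hS₀min S₁ hc) hT1
  -- forced vertices and avoidable part of the cover
  set Fo : Finset V := S₀.filter (fun v => ∀ S, SC S → v ∈ S) with hFodef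
  set S' : Finset V := S₀ \ Fo with hS'def
  have hFoS₀ : Fo ⊆ S₀ := Finset.filter_subset _ _
  have hS'avoid : ∀ w ∈ S', ∃ Tw, SC Tw ∧ w ∉ Tw := by
    intro w hw
    rw [hS'def, Finset.mem_sdiff, hFodef, Finset.mem_filter] at hw
    obtain ⟨hw1, hw2⟩ := hw
    push_neg at hw2
    obtain ⟨S, hS, hwS⟩ := hw2 hw1
    exact ⟨S, hS, hwS⟩
  have hS'Fo : ∀ w ∈ S', w ∉ Fo := by
    intro w hw; rw [hS'def, Finset.mem_sdiff] at hw; exact hw.2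
  have hS'S₀ : S' ⊆ S₀ := Finset.sdiff_subset
  -- maximum matching between S' and the outside
  set IsM : Finset (V × V) → Prop := fun M =>
    (∀ p ∈ M, p.1 ∈ S' ∧ p.2 ∉ S₀ ∧ H p.1 p.2) ∧
    (∀ p ∈ M, ∀ q ∈ M, p ≠ q → p.1 ≠ q.1 ∧ p.2 ≠ q.2) with hIsMdef
  have hmatne : ((univ : Finset (Finset (V × V))).filter IsM).Nonempty := by
    refine ⟨∅, ?_⟩
    simp only [Finset.mem_filter, Finset.mem_univ, true_and, hIsMdef]
    constructor <;> intro p hp <;> simp at hp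
  obtain ⟨M, hMmem, hMmax'⟩ :=
    Finset.exists_max_image ((univ : Finset (Finset (V × V))).filter IsM) Finset.card hmatne
  have hM : IsM M := (Finset.mem_filter.mp hMmem).2
  have hMmax : ∀ M', IsM M' → M'.card ≤ M.card := by
    intro M' hM'
    exact hMmax' M' (Finset.mem_filter.mpr ⟨Finset.mem_univ _, hM'⟩)
  set A : Finset V := M.image Prod.fst with hAdef
  set B : Finset V := M.image Prod.snd with hBdef
  have hAcard : A.card = M.card := by
    rw [hAdef]
    apply Finset.card_image_of_injOn
    intro p hp q hq hpq
    by_contra hne'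
    exact (hM.2 p hp q hq hne').1 hpq
  have hmemA : ∀ q ∈ M, q.1 ∈ A := fun q hq => Finset.mem_image_of_mem _ hq
  have hmemB : ∀ q ∈ M, q.2 ∈ B := fun q hq => Finset.mem_image_of_mem _ hq
  have hASub : A ⊆ S' := by
    intro w hw
    rw [hAdef, Finset.mem_image] at hw
    obtain ⟨p, hp, rfl⟩ := hw
    exact (hM.1 p hp).1
  have hBout : ∀ v ∈ B, v ∉ S₀ := by
    intro v hv
    rw [hBdef, Finset.mem_image] at hv
    obtain ⟨p, hp, rfl⟩ := hv
    exact (hM.1 p hp).2.1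
  set X' : Finset V := S' \ A with hX'def
  have hX'S' : X' ⊆ S' := Finset.sdiff_subset
  have hX'A : ∀ x ∈ X', x ∉ A := by
    intro x hx; rw [hX'def, Finset.mem_sdiff] at hx; exact hx.2
  -- (†)
  have hdag : ∀ x ∈ X', ∀ v, v ∉ S₀ → H x v → v ∈ B := by
    intro x hx v hv hxv
    by_contra hvB
    have hxA : x ∉ A := hX'A x hx
    have hnotmem : (x, v) ∉ M := fun hmem => hxA (hmemA _ hmem)
    have hM' : IsM (insert (x, v) M) := by
      constructor
      · intro p hp
        rcases Finset.mem_insert.mp hp with rfl | hp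
        · exact ⟨hX'S' hx, hv, hxv⟩
        · exact hM.1 p hp
      · intro p hp q hq hpq
        rcases Finset.mem_insert.mp hp with rfl | hp <;>
          rcases Finset.mem_insert.mp hq with rfl | hq
        · exact absurd rfl hpq
        · exact ⟨fun h => hxA ((show x = q.1 from h).symm ▸ hmemA q hq),
            fun h => hvB ((show v = q.2 from h).symm ▸ hmemB q hq)⟩
        · exact ⟨fun h => hxA ((show p.1 = x from h) ▸ hmemA p hp),
            fun h => hvB ((show p.2 = v from h) ▸ hmemB p hp)⟩
        · exact hM.2 p hp q hq hpq
    have := hMmax _ hM'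
    rw [Finset.card_insert_of_notMem hnotmem] at this
    omega
  -- (‡)
  have hddag : ∀ x ∈ X', ∀ e ∈ M, H x e.2 → ∀ ℓ, ℓ ∉ S₀ → ℓ ∉ B → H e.1 ℓ → False := by
    intro x hx e he hxe ℓ hℓ hℓB heℓ
    have hxA : x ∉ A := hX'A x hx
    have hxS' : x ∈ S' := hX'S' hx
    have he1 : e.1 ∈ S' := (hM.1 e he).1
    have he2 : e.2 ∉ S₀ := (hM.1 e he).2.1
    have he2B : e.2 ∈ B := hmemB e he
    have he1A : e.1 ∈ A := hmemA e he
    have hxe1 : x ≠ e.1 := fun h => hxA (h ▸ he1A)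
    set M' : Finset (V × V) := insert (x, e.2) (insert (e.1, ℓ) (M.erase e)) with hM'def
    have hmem1 : (e.1, ℓ) ∉ M.erase e := fun hmem =>
      hℓB (hmemB _ (Finset.mem_of_mem_erase hmem))
    have hmem2 : (x, e.2) ∉ insert (e.1, ℓ) (M.erase e) := by
      intro hmem
      rcases Finset.mem_insert.mp hmem with h | h
      · exact hxe1 (congrArg Prod.fst h)
      · exact hxA (hmemA _ (Finset.mem_of_mem_erase h))
    have hM'card : M'.card = M.card + 1 := by
      rw [hM'def, Finset.card_insert_of_notMem hmem2, Finset.card_insert_of_notMem hmem1,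
        Finset.card_erase_of_mem he]
      have : 1 ≤ M.card := Finset.card_pos.mpr ⟨e, he⟩
      omega
    have hIsM' : IsM M' := by
      constructor
      · intro p hp
        rw [hM'def] at hp
        rcases Finset.mem_insert.mp hp with rfl | hp
        · exact ⟨hxS', he2, hxe⟩
        rcases Finset.mem_insert.mp hp with rfl | hp
        · exact ⟨he1, hℓ, heℓ⟩
        · exact hM.1 p (Finset.mem_of_mem_erase hp)
      · have pair12 : x ≠ e.1 ∧ e.2 ≠ ℓ := ⟨hxe1, fun h => hℓB (h ▸ he2B)⟩
        have pair1q : ∀ q ∈ M.erase e, x ≠ q.1 ∧ e.2 ≠ q.2 := by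
          intro q hq
          refine ⟨fun h => hxA (h.symm ▸ hmemA q (Finset.mem_of_mem_erase hq)), fun h => ?_⟩
          have hqe : q ≠ e := Finset.ne_of_mem_erase hq
          exact (hM.2 e he q (Finset.mem_of_mem_erase hq) (Ne.symm hqe)).2 h
        have pair2q : ∀ q ∈ M.erase e, e.1 ≠ q.1 ∧ ℓ ≠ q.2 := by
          intro q hq
          refine ⟨fun h => ?_, fun h => hℓB (h.symm ▸ hmemB q (Finset.mem_of_mem_erase hq))⟩
          have hqe : q ≠ e := Finset.ne_of_mem_erase hq
          exact (hM.2 e he q (Finset.mem_of_mem_erase hq) (Ne.symm hqe)).1 h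
        intro p hp q hq hpq
        rw [hM'def] at hp hq
        rcases Finset.mem_insert.mp hp with rfl | hp
        · rcases Finset.mem_insert.mp hq with rfl | hq
          · exact absurd rfl hpq
          rcases Finset.mem_insert.mp hq with rfl | hq
          · exact pair12
          · exact pair1q q hq
        rcases Finset.mem_insert.mp hp with rfl | hp
        · rcases Finset.mem_insert.mp hq with rfl | hq
          · exact ⟨pair12.1.symm, pair12.2.symm⟩
          rcases Finset.mem_insert.mp hq with rfl | hq
          · exact absurd rfl hpq
          · exact pair2q q hq
        · rcases Finset.mem_insert.mp hq with rfl | hq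
          · have := pair1q p hp; exact ⟨this.1.symm, this.2.symm⟩
          rcases Finset.mem_insert.mp hq with rfl | hq
          · have := pair2q p hp; exact ⟨this.1.symm, this.2.symm⟩
          · exact hM.2 p (Finset.mem_of_mem_erase hp) q (Finset.mem_of_mem_erase hq) hpq
    have := hMmax _ hIsM'
    omega
  -- maximum matching inside X' (w.r.t. H)
  set IsNX : Finset (V × V) → Prop := fun M2 =>
    (∀ p ∈ M2, p.1 ∈ X' ∧ p.2 ∈ X' ∧ H p.1 p.2) ∧
    (∀ p ∈ M2, ∀ q ∈ M2, p ≠ q →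
      p.1 ≠ q.1 ∧ p.1 ≠ q.2 ∧ p.2 ≠ q.1 ∧ p.2 ≠ q.2) with hIsNXdef
  have hnxne : ((univ : Finset (Finset (V × V))).filter IsNX).Nonempty := by
    refine ⟨∅, ?_⟩
    simp only [Finset.mem_filter, Finset.mem_univ, true_and, hIsNXdef]
    constructor <;> intro p hp <;> simp at hp
  obtain ⟨NX, hNXmem, hNXmax'⟩ :=
    Finset.exists_max_image ((univ : Finset (Finset (V × V))).filter IsNX) Finset.card hnxne
  have hNX : IsNX NX := (Finset.mem_filter.mp hNXmem).2
  have hNXmax : ∀ M', IsNX M' → M'.card ≤ NX.card := by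
    intro M' hM'
    exact hNXmax' M' (Finset.mem_filter.mpr ⟨Finset.mem_univ _, hM'⟩)
  set Vnx : Finset V := NX.image Prod.fst ∪ NX.image Prod.snd with hVnxdef
  have hVnxX' : Vnx ⊆ X' := by
    intro u hu
    rw [hVnxdef, Finset.mem_union] at hu
    rcases hu with hu | hu <;> rw [Finset.mem_image] at hu <;> obtain ⟨p, hp, rfl⟩ := hu
    · exact (hNX.1 p hp).1
    · exact (hNX.1 p hp).2.1
  have hVnxcard : Vnx.card ≤ 2 * NX.card := by
    calc Vnx.card ≤ (NX.image Prod.fst).card + (NX.image Prod.snd).card :=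
          Finset.card_union_le _ _
    _ ≤ NX.card + NX.card := by
          gcongr <;> exact Finset.card_image_le
    _ = 2 * NX.card := by ring
  have h2nx' : 2 * NX.card ≤ X'.card := by
    have hdisj : Disjoint (NX.image Prod.fst) (NX.image Prod.snd) := by
      rw [Finset.disjoint_left]
      intro u hu1 hu2
      rw [Finset.mem_image] at hu1 hu2
      obtain ⟨p, hp, rfl⟩ := hu1
      obtain ⟨q, hq, hq2⟩ := hu2
      by_cases hpq : p = q
      · subst hpq
        exact hirr _ _ (hNX.1 p hp).2.2 hq2.symm
      · exact ((hNX.2 p hp q hq hpq).2.1) hq2.symm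
    have hfst : (NX.image Prod.fst).card = NX.card := by
      apply Finset.card_image_of_injOn
      intro p hp q hq hpq
      by_contra hne'
      exact (hNX.2 p hp q hq hne').1 hpq
    have hsnd : (NX.image Prod.snd).card = NX.card := by
      apply Finset.card_image_of_injOn
      intro p hp q hq hpq
      by_contra hne'
      exact (hNX.2 p hp q hq hne').2.2.2 hpq
    have := Finset.card_le_card (show Vnx ⊆ X' from hVnxX')
    rw [hVnxdef, Finset.card_union_of_disjoint hdisj, hfst, hsnd] at this
    omega
  -- maximality of NX
  have hNXmaximal : ∀ u v, u ∈ X' → v ∈ X' → H u v → u ∈ Vnx ∨ v ∈ Vnx := by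
    intro u v hu hv huv
    by_contra hcon
    push_neg at hcon
    obtain ⟨hu2, hv2⟩ := hcon
    have humem : ∀ q ∈ NX, u ≠ q.1 ∧ u ≠ q.2 := by
      intro q hq
      constructor
      · intro h
        exact hu2 (by rw [hVnxdef]
                      exact Finset.mem_union_left _ (h ▸ Finset.mem_image_of_mem _ hq))
      · intro h
        exact hu2 (by rw [hVnxdef]
                      exact Finset.mem_union_right _ (h ▸ Finset.mem_image_of_mem _ hq))
    have hvmem : ∀ q ∈ NX, v ≠ q.1 ∧ v ≠ q.2 := by
      intro q hq
      constructor
      · intro h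
        exact hv2 (by rw [hVnxdef]
                      exact Finset.mem_union_left _ (h ▸ Finset.mem_image_of_mem _ hq))
      · intro h
        exact hv2 (by rw [hVnxdef]
                      exact Finset.mem_union_right _ (h ▸ Finset.mem_image_of_mem _ hq))
    have hnotmem : (u, v) ∉ NX := by
      intro hmem
      exact (humem _ hmem).1 rfl
    have hIsNX' : IsNX (insert (u, v) NX) := by
      constructor
      · intro p hp
        rcases Finset.mem_insert.mp hp with rfl | hp
        · exact ⟨hu, hv, huv⟩
        · exact hNX.1 p hp
      · intro p hp q hq hpq
        rcases Finset.mem_insert.mp hp with rfl | hp <;>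
          rcases Finset.mem_insert.mp hq with rfl | hq
        · exact absurd rfl hpq
        · exact ⟨(humem q hq).1, (humem q hq).2, (hvmem q hq).1, (hvmem q hq).2⟩
        · exact ⟨((humem p hp).1).symm, ((hvmem p hp).1).symm,
            ((humem p hp).2).symm, ((hvmem p hp).2).symm⟩
        · exact hNX.2 p hp q hq hpq
    have := hNXmax _ hIsNX'
    rw [Finset.card_insert_of_notMem hnotmem] at this
    omega
  -- W₁ and B₂
  set W₁ : Finset V := A.filter (fun w => ∃ ℓ, ℓ ∉ S₀ ∧ ℓ ∉ B ∧ H w ℓ) with hW₁def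
  have hW₁A : W₁ ⊆ A := Finset.filter_subset _ _
  set B₂ : Finset V := (M.filter (fun e => e.1 ∉ W₁)).image Prod.snd with hB₂def
  have hB₂mem : ∀ x ∈ X', ∀ v, v ∉ S₀ → H x v → v ∈ B₂ := by
    intro x hx v hv hxv
    have hvB : v ∈ B := hdag x hx v hv hxv
    rw [hBdef, Finset.mem_image] at hvB
    obtain ⟨e, he, he2⟩ := hvB
    by_cases hew : e.1 ∈ W₁
    · exfalso
      rw [hW₁def, Finset.mem_filter] at hew
      obtain ⟨-, ℓ, hℓ1, hℓ2, hℓ3⟩ := hew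
      exact hddag x hx e he (he2.symm ▸ hxv) ℓ hℓ1 hℓ2 hℓ3
    · rw [hB₂def]
      exact he2 ▸ Finset.mem_image_of_mem _ (Finset.mem_filter.mpr ⟨he, hew⟩)
  -- the swap bound : X'.card + W₁.card ≤ M.card + 2 * NX.card
  have hswap : X'.card + W₁.card ≤ M.card + 2 * NX.card := by
    set Sstar : Finset V := ((S₀ \ X') ∪ B₂) ∪ Vnx with hSstardef
    have hcovstar : Cov Sstar := by
      have key : ∀ u v, H u v → u ∈ S₀ → u ∈ Sstar ∨ v ∈ Sstar := by
        intro u v huv huS₀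
        by_cases huX : u ∈ X'
        · by_cases hvS₀ : v ∈ S₀
          · by_cases hvX : v ∈ X'
            · rcases hNXmaximal u v huX hvX huv with h | h
              · exact Or.inl (by rw [hSstardef]; exact Finset.mem_union_right _ h)
              · exact Or.inr (by rw [hSstardef]; exact Finset.mem_union_right _ h)
            · refine Or.inr ?_
              rw [hSstardef]
              exact Finset.mem_union_left _ (Finset.mem_union_left _
                (Finset.mem_sdiff.mpr ⟨hvS₀, hvX⟩))
          · refine Or.inr ?_
            rw [hSstardef]
            exact Finset.mem_union_left _ (Finset.mem_union_right _
              (hB₂mem u huX v hvS₀ huv))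
        · refine Or.inl ?_
          rw [hSstardef]
          exact Finset.mem_union_left _ (Finset.mem_union_left _
            (Finset.mem_sdiff.mpr ⟨huS₀, huX⟩))
      intro u v huv
      rcases hS₀cov u v huv with h | h
      · exact key u v huv h
      · rcases key v u (hsym u v huv) h with h' | h'
        · exact Or.inr h'
        · exact Or.inl h'
    -- cardinalities
    have hc1 : (S₀ \ X').card + X'.card = S₀.card :=
      Finset.card_sdiff_add_card_eq_card (hX'S'.trans hS'S₀)
    set Mw : Finset (V × V) := M.filter (fun e => e.1 ∈ W₁) with hMwdef
    have hMwcard : Mw.card = W₁.card := by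
      have himg : Mw.image Prod.fst = W₁ := by
        apply Finset.Subset.antisymm
        · intro w hw
          rw [Finset.mem_image] at hw
          obtain ⟨p, hp, rfl⟩ := hw
          exact (Finset.mem_filter.mp hp).2
        · intro w hw
          have hwA : w ∈ A := hW₁A hw
          rw [hAdef, Finset.mem_image] at hwA
          obtain ⟨p, hp, rfl⟩ := hwA
          exact Finset.mem_image_of_mem _ (Finset.mem_filter.mpr ⟨hp, hw⟩)
      have hinj : (Mw.image Prod.fst).card = Mw.card := by
        apply Finset.card_image_of_injOn
        intro p hp q hq hpq
        by_contra hne'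
        exact (hM.2 p (Finset.mem_of_mem_filter _ hp) q (Finset.mem_of_mem_filter _ hq)
          hne').1 hpq
      rw [← himg, hinj]
    have hMsplit : Mw.card + (M.filter (fun e => e.1 ∉ W₁)).card = M.card := by
      rw [hMwdef]
      exact Finset.card_filter_add_card_filter_not _
    have hB₂card : B₂.card ≤ (M.filter (fun e => e.1 ∉ W₁)).card := by
      rw [hB₂def]; exact Finset.card_image_le
    have hstarbound : S₀.card ≤ (S₀ \ X').card + B₂.card + Vnx.card := by
      calc S₀.card ≤ Sstar.card := hS₀min _ hcovstar
      _ ≤ ((S₀ \ X') ∪ B₂).card + Vnx.card := by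
            rw [hSstardef]; exact Finset.card_union_le _ _
      _ ≤ (S₀ \ X').card + B₂.card + Vnx.card := by
            have := Finset.card_union_le (S₀ \ X') B₂
            omega
    omega
  -- the budget bound for each w ∈ W₁
  have hbudget : ∀ w ∈ W₁,
      (((univ.filter (fun u => H w u)) \ S₀) \ B).card + (Fo.card + M.card + NX.card) ≤ T := by
    intro w hw
    have hwA : w ∈ A := hW₁A hw
    rw [hAdef, Finset.mem_image] at hwA
    obtain ⟨ew, hew, hew1⟩ := hwA
    have hwS' : w ∈ S' := hASub (hew1 ▸ hmemA ew hew)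
    obtain ⟨Tw, ⟨hTwcov, hTwT⟩, hwTw⟩ := hS'avoid w hwS'
    set NHw : Finset V := univ.filter (fun u => H w u) with hNHwdef
    have hNHmem : ∀ u, u ∈ NHw ↔ H w u := by
      intro u; rw [hNHwdef, Finset.mem_filter]; simp
    have hNHsub : NHw ⊆ Tw := by
      intro u hu
      rcases hTwcov w u ((hNHmem u).mp hu) with h | h
      · exact absurd h hwTw
      · exact h
    have hFoTw : Fo ⊆ Tw := by
      intro v hv
      exact (Finset.mem_filter.mp hv).2 Tw ⟨hTwcov, hTwT⟩
    set P1 : Finset V := NHw ∩ Fo with hP1def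
    set P2 : Finset V := NHw ∩ A with hP2def
    set P3 : Finset V := NHw ∩ B with hP3def
    set P4 : Finset V := NHw ∩ X' with hP4def
    set P5 : Finset V := (NHw \ S₀) \ B with hP5def
    -- the five pieces fit inside NHw
    have hNHge : P1.card + P2.card + P4.card + P3.card + P5.card ≤ NHw.card := by
      have hd12 : Disjoint P1 P2 := by
        rw [Finset.disjoint_left]
        intro u h1 h2
        exact hS'Fo u (hASub (Finset.mem_inter.mp h2).2) (Finset.mem_inter.mp h1).2
      have hd14 : Disjoint (P1 ∪ P2) P4 := by
        rw [Finset.disjoint_left]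
        intro u h1 h2
        have huX : u ∈ X' := (Finset.mem_inter.mp h2).2
        rcases Finset.mem_union.mp h1 with h | h
        · exact hS'Fo u (hX'S' huX) (Finset.mem_inter.mp h).2
        · exact hX'A u huX (Finset.mem_inter.mp h).2
      have hsub1 : P1 ∪ P2 ∪ P4 ⊆ NHw ∩ S₀ := by
        intro u hu
        rcases Finset.mem_union.mp hu with hu | hu
        · rcases Finset.mem_union.mp hu with hu | hu
          · obtain ⟨h1, h2⟩ := Finset.mem_inter.mp hu
            exact Finset.mem_inter.mpr ⟨h1, hFoS₀ h2⟩
          · obtain ⟨h1, h2⟩ := Finset.mem_inter.mp hu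
            exact Finset.mem_inter.mpr ⟨h1, hS'S₀ (hASub h2)⟩
        · obtain ⟨h1, h2⟩ := Finset.mem_inter.mp hu
          exact Finset.mem_inter.mpr ⟨h1, hS'S₀ (hX'S' h2)⟩
      have hc124 : P1.card + P2.card + P4.card ≤ (NHw ∩ S₀).card := by
        have := Finset.card_le_card hsub1
        rwa [Finset.card_union_of_disjoint hd14, Finset.card_union_of_disjoint hd12] at this
      have hd35 : Disjoint P3 P5 := by
        rw [Finset.disjoint_left]
        intro u h1 h2
        exact (Finset.mem_sdiff.mp h2).2 (Finset.mem_inter.mp h1).2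
      have hsub2 : P3 ∪ P5 ⊆ NHw \ S₀ := by
        intro u hu
        rcases Finset.mem_union.mp hu with hu | hu
        · obtain ⟨h1, h2⟩ := Finset.mem_inter.mp hu
          exact Finset.mem_sdiff.mpr ⟨h1, hBout u h2⟩
        · exact (Finset.mem_sdiff.mp hu).1
      have hc35 : P3.card + P5.card ≤ (NHw \ S₀).card := by
        have := Finset.card_le_card hsub2
        rwa [Finset.card_union_of_disjoint hd35] at this
      have := Finset.card_inter_add_card_sdiff NHw S₀
      omega
    -- the partner of w lies in P3
    have hvwP3 : ew.2 ∈ P3 := by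
      refine Finset.mem_inter.mpr ⟨(hNHmem _).mpr ?_, hmemB ew hew⟩
      have := (hM.1 ew hew).2.2
      rwa [hew1] at this
    have hP3pos : 1 ≤ P3.card := Finset.card_pos.mpr ⟨ew.2, hvwP3⟩
    set Me : Finset (V × V) := M.erase ew with hMedef
    have hMecard : Me.card + 1 = M.card := by
      rw [hMedef, Finset.card_erase_of_mem hew]
      have : 1 ≤ M.card := Finset.card_pos.mpr ⟨ew, hew⟩
      omega
    set pm : V × V → Prop := fun e => e.1 ∈ NHw ∨ e.2 ∈ NHw with hpmdef
    set Mmeet : Finset (V × V) := Me.filter pm with hMmeetdef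
    set Mavoid : Finset (V × V) := Me.filter (fun e => ¬ pm e) with hMavoiddef
    have hMsplit2 : Mmeet.card + Mavoid.card = Me.card := by
      rw [hMmeetdef, hMavoiddef]
      exact Finset.card_filter_add_card_filter_not _
    have hMmeetle : Mmeet.card + 1 ≤ P2.card + P3.card := by
      have hinj : Mmeet.card ≤ (P2 ∪ P3.erase ew.2).card := by
        apply Finset.card_le_card_of_injOn (fun e => if e.1 ∈ NHw then e.1 else e.2)
        · intro e he
          obtain ⟨heMe, hepm⟩ := Finset.mem_filter.mp he
          have heM : e ∈ M := Finset.mem_of_mem_erase heMe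
          by_cases h1 : e.1 ∈ NHw
          · simp only [h1, if_true]
            exact Finset.mem_union_left _ (Finset.mem_inter.mpr ⟨h1, hmemA e heM⟩)
          · simp only [h1, if_false]
            have h2 : e.2 ∈ NHw := by
              rcases hepm with h | h
              · exact absurd h h1
              · exact h
            refine Finset.mem_union_right _ (Finset.mem_erase.mpr ⟨?_, Finset.mem_inter.mpr ⟨h2, hmemB e heM⟩⟩)
            have hne' : e ≠ ew := Finset.ne_of_mem_erase heMe
            exact (hM.2 e heM ew hew hne').2
        · intro p hp q hq hfg
          simp only [Finset.mem_coe] at hp hq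
          obtain ⟨hpMe, -⟩ := Finset.mem_filter.mp hp
          obtain ⟨hqMe, -⟩ := Finset.mem_filter.mp hq
          have hpM : p ∈ M := Finset.mem_of_mem_erase hpMe
          have hqM : q ∈ M := Finset.mem_of_mem_erase hqMe
          by_contra hpq
          have hco := hM.2 p hpM q hqM hpq
          by_cases h1 : p.1 ∈ NHw <;> by_cases h2 : q.1 ∈ NHw <;>
            simp only [h1, h2, if_true, if_false] at hfg
          · exact hco.1 hfg
          · exact hBout q.2 (hmemB q hqM) (hfg ▸ hS'S₀ ((hM.1 p hpM).1))
          · exact hBout p.2 (hmemB p hpM) (hfg.symm ▸ hS'S₀ ((hM.1 q hqM).1))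
          · exact hco.2 hfg
      have h1 : (P2 ∪ P3.erase ew.2).card ≤ P2.card + (P3.erase ew.2).card :=
        Finset.card_union_le _ _
      have h2 : (P3.erase ew.2).card + 1 = P3.card := by
        rw [Finset.card_erase_of_mem hvwP3]
        omega
      omega
    set NXmeet : Finset (V × V) := NX.filter pm with hNXmeetdef
    set NXavoid : Finset (V × V) := NX.filter (fun e => ¬ pm e) with hNXavoiddef
    have hNXsplit : NXmeet.card + NXavoid.card = NX.card := by
      rw [hNXmeetdef, hNXavoiddef]
      exact Finset.card_filter_add_card_filter_not _
    have hNXmeetle : NXmeet.card ≤ P4.card := by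
      apply Finset.card_le_card_of_injOn (fun e => if e.1 ∈ NHw then e.1 else e.2)
      · intro e he
        obtain ⟨heNX, hepm⟩ := Finset.mem_filter.mp he
        by_cases h1 : e.1 ∈ NHw
        · simp only [h1, if_true]
          exact Finset.mem_inter.mpr ⟨h1, (hNX.1 e heNX).1⟩
        · simp only [h1, if_false]
          have h2 : e.2 ∈ NHw := by
            rcases hepm with h | h
            · exact absurd h h1
            · exact h
          exact Finset.mem_inter.mpr ⟨h2, (hNX.1 e heNX).2.1⟩
      · intro p hp q hq hfg
        simp only [Finset.mem_coe] at hp hq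
        obtain ⟨hpNX, -⟩ := Finset.mem_filter.mp hp
        obtain ⟨hqNX, -⟩ := Finset.mem_filter.mp hq
        by_contra hpq
        have hco := hNX.2 p hpNX q hqNX hpq
        by_cases h1 : p.1 ∈ NHw <;> by_cases h2 : q.1 ∈ NHw <;>
          simp only [h1, h2, if_true, if_false] at hfg
        · exact hco.1 hfg
        · exact hco.2.1 hfg
        · exact hco.2.2.1 hfg
        · exact hco.2.2.2 hfg
    -- representatives of avoided edges inside Tw
    set E : Finset (V × V) := Mavoid ∪ NXavoid with hEdef
    have hEdisj : Disjoint Mavoid NXavoid := by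
      rw [Finset.disjoint_left]
      intro e h1 h2
      have h1' : e ∈ M := Finset.mem_of_mem_erase (Finset.mem_of_mem_filter _ h1)
      have h2' : e ∈ NX := Finset.mem_of_mem_filter _ h2
      exact (hM.1 e h1').2.1 (hS'S₀ (hX'S' ((hNX.1 e h2').2.1)))
    have hEcard : E.card = Mavoid.card + NXavoid.card := by
      rw [hEdef]; exact Finset.card_union_of_disjoint hEdisj
    have hEbound : E.card ≤ ((Tw \ NHw) \ Fo).card := by
      apply Finset.card_le_card_of_injOn (fun e => if e.1 ∈ Tw then e.1 else e.2)
      · intro e he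
        have heH : H e.1 e.2 ∧ (e.1 ∉ NHw ∧ e.2 ∉ NHw) ∧
            ((e.1 ∈ S' ∧ e.2 ∉ S₀) ∨ (e.1 ∈ X' ∧ e.2 ∈ X')) := by
          rcases Finset.mem_union.mp he with h | h
          · obtain ⟨hMe', hnpm⟩ := Finset.mem_filter.mp h
            have heM : e ∈ M := Finset.mem_of_mem_erase hMe'
            exact ⟨(hM.1 e heM).2.2, ⟨fun hc => hnpm (Or.inl hc), fun hc => hnpm (Or.inr hc)⟩,
              Or.inl ⟨(hM.1 e heM).1, (hM.1 e heM).2.1⟩⟩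
          · obtain ⟨hNX', hnpm⟩ := Finset.mem_filter.mp h
            exact ⟨(hNX.1 e hNX').2.2, ⟨fun hc => hnpm (Or.inl hc), fun hc => hnpm (Or.inr hc)⟩,
              Or.inr ⟨(hNX.1 e hNX').1, (hNX.1 e hNX').2.1⟩⟩
        obtain ⟨hH12, ⟨hn1, hn2⟩, hcases⟩ := heH
        by_cases h1 : e.1 ∈ Tw
        · simp only [h1, if_true]
          refine Finset.mem_sdiff.mpr ⟨Finset.mem_sdiff.mpr ⟨h1, hn1⟩, ?_⟩
          rcases hcases with ⟨ha, -⟩ | ⟨ha, -⟩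
          · exact hS'Fo _ ha
          · exact hS'Fo _ (hX'S' ha)
        · simp only [h1, if_false]
          have h2 : e.2 ∈ Tw := by
            rcases hTwcov e.1 e.2 hH12 with h | h
            · exact absurd h h1
            · exact h
          refine Finset.mem_sdiff.mpr ⟨Finset.mem_sdiff.mpr ⟨h2, hn2⟩, ?_⟩
          rcases hcases with ⟨-, hb⟩ | ⟨-, hb⟩
          · exact fun hc => hb (hFoS₀ hc)
          · exact hS'Fo _ (hX'S' hb)
      · intro p hp q hq hfg
        simp only [Finset.mem_coe] at hp hq
        by_contra hpq
        have hdistinct : p.1 ≠ q.1 ∧ p.1 ≠ q.2 ∧ p.2 ≠ q.1 ∧ p.2 ≠ q.2 := by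
          rcases Finset.mem_union.mp hp with h1 | h1 <;> rcases Finset.mem_union.mp hq with h2 | h2
          · have hpM : p ∈ M := Finset.mem_of_mem_erase (Finset.mem_of_mem_filter _ h1)
            have hqM : q ∈ M := Finset.mem_of_mem_erase (Finset.mem_of_mem_filter _ h2)
            have hco := hM.2 p hpM q hqM hpq
            refine ⟨hco.1, ?_, ?_, hco.2⟩
            · exact fun h => (hM.1 q hqM).2.1 (h ▸ hS'S₀ (hM.1 p hpM).1)
            · exact fun h => (hM.1 p hpM).2.1 (h ▸ hS'S₀ (hM.1 q hqM).1)
          · have hpM : p ∈ M := Finset.mem_of_mem_erase (Finset.mem_of_mem_filter _ h1)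
            have hqNX : q ∈ NX := Finset.mem_of_mem_filter _ h2
            have hq1 : q.1 ∈ X' := (hNX.1 q hqNX).1
            have hq2 : q.2 ∈ X' := (hNX.1 q hqNX).2.1
            have hp1 : p.1 ∈ A := hmemA p hpM
            have hp2 : p.2 ∉ S₀ := (hM.1 p hpM).2.1
            exact ⟨fun h => hX'A _ hq1 (h ▸ hp1), fun h => hX'A _ hq2 (h ▸ hp1),
              fun h => hp2 (h ▸ hS'S₀ (hX'S' hq1)), fun h => hp2 (h ▸ hS'S₀ (hX'S' hq2))⟩
          · have hqM : q ∈ M := Finset.mem_of_mem_erase (Finset.mem_of_mem_filter _ h2)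
            have hpNX : p ∈ NX := Finset.mem_of_mem_filter _ h1
            have hp1 : p.1 ∈ X' := (hNX.1 p hpNX).1
            have hp2 : p.2 ∈ X' := (hNX.1 p hpNX).2.1
            have hq1 : q.1 ∈ A := hmemA q hqM
            have hq2 : q.2 ∉ S₀ := (hM.1 q hqM).2.1
            exact ⟨fun h => hX'A _ hp1 (h.symm ▸ hq1), fun h => hq2 (h.symm ▸ hS'S₀ (hX'S' hp1)),
              fun h => hX'A _ hp2 (h.symm ▸ hq1), fun h => hq2 (h.symm ▸ hS'S₀ (hX'S' hp2))⟩
          · have hpNX : p ∈ NX := Finset.mem_of_mem_filter _ h1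
            have hqNX : q ∈ NX := Finset.mem_of_mem_filter _ h2
            exact hNX.2 p hpNX q hqNX hpq
        by_cases h1 : p.1 ∈ Tw <;> by_cases h2 : q.1 ∈ Tw <;>
          simp only [h1, h2, if_true, if_false] at hfg
        · exact hdistinct.1 hfg
        · exact hdistinct.2.1 hfg
        · exact hdistinct.2.2.1 hfg
        · exact hdistinct.2.2.2 hfg
    -- Tw contains three disjoint parts
    have hTwbig : NHw.card + (Fo \ NHw).card + ((Tw \ NHw) \ Fo).card ≤ Tw.card := by
      have hd1 : Disjoint NHw (Fo \ NHw) := by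
        rw [Finset.disjoint_left]
        intro u h1 h2
        exact (Finset.mem_sdiff.mp h2).2 h1
      have hd2 : Disjoint (NHw ∪ (Fo \ NHw)) ((Tw \ NHw) \ Fo) := by
        rw [Finset.disjoint_left]
        intro u h1 h2
        obtain ⟨hu1, hu2⟩ := Finset.mem_sdiff.mp h2
        rcases Finset.mem_union.mp h1 with h | h
        · exact (Finset.mem_sdiff.mp hu1).2 h
        · exact hu2 (Finset.mem_sdiff.mp h).1
      have hsub : NHw ∪ (Fo \ NHw) ∪ ((Tw \ NHw) \ Fo) ⊆ Tw := by
        intro u hu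
        rcases Finset.mem_union.mp hu with hu | hu
        · rcases Finset.mem_union.mp hu with hu | hu
          · exact hNHsub hu
          · exact hFoTw (Finset.mem_sdiff.mp hu).1
        · exact (Finset.mem_sdiff.mp (Finset.mem_sdiff.mp hu).1).1
      have := Finset.card_le_card hsub
      rwa [Finset.card_union_of_disjoint hd2, Finset.card_union_of_disjoint hd1] at this
    have hFosplit : (Fo \ NHw).card + P1.card = Fo.card := by
      rw [hP1def, Finset.inter_comm]
      exact Finset.card_sdiff_add_card_inter Fo NHw
    -- conclude
    rw [hP5def] at *
    omega
  -- final counting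
  set Vs : Finset V := univ.filter (fun v => v ∈ Vstar) with hVsdef
  have hVscard : Vstar.ncard = Vs.card := by
    have hVseq : Vstar = ↑Vs := by
      ext v
      simp [hVsdef]
    rw [hVseq, Set.ncard_coe_finset]
  set Yf : Finset V := univ \ Vs with hYfdef
  have hYsub : Yf ⊆ (S₀ ∪ B) ∪
      W₁.biUnion (fun w => ((univ.filter (fun u => H w u)) \ S₀) \ B) := by
    intro v hv
    have hvY : v ∉ Vstar := by
      rw [hYfdef, Finset.mem_sdiff] at hv
      intro hc
      exact hv.2 (Finset.mem_filter.mpr ⟨Finset.mem_univ _, hc⟩)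
    by_cases hvS₀ : v ∈ S₀
    · exact Finset.mem_union_left _ (Finset.mem_union_left _ hvS₀)
    · have hvV' : v ∈ V' := (hV'iff v).mpr ⟨S₀, ⟨hS₀cov, hS₀T⟩, hvS₀⟩
      have hex : ¬ ∀ w ∈ V', w = v ∨ G.Adj v w := by
        intro hc
        apply hvY
        rw [hVstar]
        exact ⟨hvV', hc⟩
      push_neg at hex
      obtain ⟨u, huV', hune, hunadj⟩ := hex
      have hHvu : H v u := ⟨fun h => hune h.symm, hunadj⟩
      have huS₀ : u ∈ S₀ := by
        rcases hS₀cov v u hHvu with h | h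
        · exact absurd h hvS₀
        · exact h
      have huFo : u ∉ Fo := by
        intro hc
        obtain ⟨S, hS, huS⟩ := (hV'iff u).mp huV'
        exact huS ((Finset.mem_filter.mp hc).2 S hS)
      have huS' : u ∈ S' := Finset.mem_sdiff.mpr ⟨huS₀, huFo⟩
      by_cases huA : u ∈ A
      · by_cases hvB : v ∈ B
        · exact Finset.mem_union_left _ (Finset.mem_union_right _ hvB)
        · have huW₁ : u ∈ W₁ :=
            Finset.mem_filter.mpr ⟨huA, ⟨v, hvS₀, hvB, hsym v u hHvu⟩⟩
          refine Finset.mem_union_right _ (Finset.mem_biUnion.mpr ⟨u, huW₁, ?_⟩)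
          exact Finset.mem_sdiff.mpr ⟨Finset.mem_sdiff.mpr
            ⟨Finset.mem_filter.mpr ⟨Finset.mem_univ _, hsym v u hHvu⟩, hvS₀⟩, hvB⟩
      · have huX' : u ∈ X' := Finset.mem_sdiff.mpr ⟨huS', huA⟩
        exact Finset.mem_union_left _
          (Finset.mem_union_right _ (hdag u huX' v hvS₀ (hsym v u hHvu)))
  set K : ℕ := T - (Fo.card + M.card + NX.card) with hKdef
  have hYcard : Yf.card ≤ (S₀.card + M.card) + W₁.card * K := by
    have h1 : Yf.card ≤ (S₀ ∪ B).card +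
        (W₁.biUnion (fun w => ((univ.filter (fun u => H w u)) \ S₀) \ B)).card := by
      calc Yf.card ≤ ((S₀ ∪ B) ∪
          W₁.biUnion (fun w => ((univ.filter (fun u => H w u)) \ S₀) \ B)).card :=
            Finset.card_le_card hYsub
      _ ≤ _ := Finset.card_union_le _ _
    have h2 : (S₀ ∪ B).card ≤ S₀.card + M.card := by
      calc (S₀ ∪ B).card ≤ S₀.card + B.card := Finset.card_union_le _ _
      _ ≤ S₀.card + M.card := by
            have : B.card ≤ M.card := by rw [hBdef]; exact Finset.card_image_le
            omega
    have h3 : (W₁.biUnion (fun w => ((univ.filter (fun u => H w u)) \ S₀) \ B)).card ≤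
        W₁.card * K := by
      calc (W₁.biUnion (fun w => ((univ.filter (fun u => H w u)) \ S₀) \ B)).card ≤
          ∑ w ∈ W₁, (((univ.filter (fun u => H w u)) \ S₀) \ B).card :=
            Finset.card_biUnion_le
      _ ≤ ∑ _w ∈ W₁, K := by
            apply Finset.sum_le_sum
            intro w hw
            have := hbudget w hw
            rw [hKdef]
            omega
      _ = W₁.card * K := by rw [Finset.sum_const, smul_eq_mul]
    omega
  have hS'card : S'.card + Fo.card = S₀.card := by
    rw [hS'def]
    exact Finset.card_sdiff_add_card_eq_card hFoS₀
  have hX'card : X'.card + A.card = S'.card := by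
    rw [hX'def]
    exact Finset.card_sdiff_add_card_eq_card hASub
  have h5 : W₁.card = 0 ∨ Fo.card + M.card + NX.card + K ≤ T := by
    rcases Finset.eq_empty_or_nonempty W₁ with h | ⟨w, hw⟩
    · left; rw [h, Finset.card_empty]
    · right
      have := hbudget w hw
      rw [hKdef]
      omega
  have hW₁card : W₁.card ≤ M.card := by
    have := Finset.card_le_card hW₁A
    omega
  have h3' : Fo.card + M.card + X'.card ≤ T := by omega
  have harith := arith_key T Fo.card M.card X'.card NX.card W₁.card K
    hswap h2nx' h3' hW₁card h5
  have hYF : Yf.card ≤ T + T^2/4 + 1 := by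
    have h4Y : Yf.card * 4 ≤ (T+2)^2 := by
      have hL : Yf.card ≤ Fo.card + 2*M.card + X'.card + W₁.card * K := by omega
      omega
    have hdiv : (T+2)^2 = T^2 + (T+1)*4 := by ring
    have hfin : Yf.card ≤ (T^2 + (T+1)*4)/4 := by
      rw [← hdiv]
      exact (Nat.le_div_iff_mul_le (by norm_num)).mpr h4Y
    rw [Nat.add_mul_div_right _ _ (by norm_num : (0:ℕ) < 4)] at hfin
    omega
  have hVsle : Vs.card ≤ N := hNV ▸ Vs.card_le_univ
  have hYfcard : Yf.card + Vs.card = N := by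
    rw [hYfdef, Finset.card_sdiff_of_subset (Finset.subset_univ _)]
    have h1 : Vs.card ≤ (univ : Finset V).card := Vs.card_le_univ
    have h2 : (univ : Finset V).card = N := hNV
    omega
  rw [hVscard]
  omega
end

section
/- In the syndrome-graph decoding setting: if at least N-T of the received vectors ȳ₁,...,ȳ_N are unaltered (ȳ_i = y_i), where y = A x for a matrix A with all (N-T)×(N-T) submatrices nonsingular, and the syndrome graph (edge between i and j, allowing i = j, iff ⟨ȳ_i, ȳ_j⟩ = ⟨y_i, y_j⟩) is formed, then every vertex i ∈ V* (the set of vertices with self-loops contained in an (N-T)-clique and joined to all such vertices) satisfies ȳ_i = y_i. -/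
open scoped RealInnerProductSpace

/-!
The unaltered vertices form a clique of size at least `N - T`, so every `i ∈ V*` is joined to
all of them: `ȳ_i - y_i` is orthogonal to `y_j` for `N - T` unaltered indices `j`. As every
`(N - T)`-row submatrix of `A` is invertible, these `y_j` span all codewords, so
`ȳ_i - y_i ⊥ y_i`. Together with the self-loop `‖ȳ_i‖ = ‖y_i‖` this forces `ȳ_i = y_i`.
-/

open Submodule Set

theorem Matrix.mem_span_range_sum_smul {R M n : Type*} [CommRing R] [AddCommGroup M]
    [Module R M] [Fintype n] [DecidableEq n] (B : Matrix n n R) (hB : IsUnit B.det)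
    (x : n → M) (k : n) : x k ∈ span R (range fun m => ∑ j, B m j • x j) := by
  have hx : x k = ∑ m, B⁻¹ k m • ∑ j, B m j • x j := by
    simp_rw [Finset.smul_sum, smul_smul]
    rw [Finset.sum_comm]
    simp_rw [← Finset.sum_smul, ← Matrix.mul_apply, Matrix.nonsing_inv_mul B hB,
      Matrix.one_apply, ite_smul, one_smul, zero_smul, Finset.sum_ite_eq, Finset.mem_univ,
      if_true]
  rw [hx]
  exact sum_mem fun m _ => smul_mem _ _ (subset_span (mem_range_self m))

theorem Matrix.mem_span_codewords {R M m n : Type*} [CommRing R] [AddCommGroup M] [Module R M]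
    [Fintype n] [DecidableEq n] (A : Matrix m n R) (e : n → m)
    (he : IsUnit (A.submatrix e id).det) (x : n → M) (y : m → M)
    (hy : ∀ i, y i = ∑ j, A i j • x j) (i : m) : y i ∈ span R (range (y ∘ e)) := by
  have hye : y ∘ e = fun k => ∑ j, A.submatrix e id k j • x j := funext fun k => hy (e k)
  rw [hy i, hye]
  exact sum_mem fun j _ => smul_mem _ _ (Matrix.mem_span_range_sum_smul _ he x j)

theorem eq_of_inner_self_eq_of_inner_sub_eq_zero {E : Type*} [NormedAddCommGroup E]
    [InnerProductSpace ℝ E] {u v : E} (hnorm : ⟪u, u⟫ = ⟪v, v⟫) (horth : ⟪u - v, v⟫ = 0) :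
    u = v := by
  rw [inner_sub_left] at horth
  rw [← sub_eq_zero, ← inner_self_eq_zero (𝕜 := ℝ), inner_sub_left, inner_sub_right,
    inner_sub_right, real_inner_comm u v]
  linarith

theorem stmt_11_general (N T N₀ : ℕ)
    (A : Matrix (Fin N) (Fin (N - T)) ℝ)
    (hA : ∀ e : Fin (N - T) → Fin N, Function.Injective e →
      (Matrix.of fun i j : Fin (N - T) => A (e i) j).det ≠ 0)
    (x : Fin (N - T) → EuclideanSpace ℝ (Fin N₀))
    (y ybar : Fin N → EuclideanSpace ℝ (Fin N₀))
    (hy : ∀ i, y i = ∑ j, A i j • x j)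
    (hunalt : ∃ U : Finset (Fin N), N - T ≤ U.card ∧ ∀ i ∈ U, ybar i = y i)
    -- syndrome graph: Edge i j (allowing i = j) iff inner products agree
    (Edge : Fin N → Fin N → Prop)
    (hEdge : ∀ i j, Edge i j ↔ ⟪ybar i, ybar j⟫ = ⟪y i, y j⟫)
    -- V': vertices with self-loops contained in a clique of size ≥ N-T
    (V' : Set (Fin N))
    (hV' : V' = {i : Fin N | ∃ s : Finset (Fin N),
      (∀ a ∈ s, ∀ b ∈ s, Edge a b) ∧ N - T ≤ s.card ∧ i ∈ s})
    -- V*: vertices of V' joined (with self-loop) to all of V'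
    (Vstar : Set (Fin N))
    (hVstar : Vstar = {i ∈ V' | Edge i i ∧ ∀ j ∈ V', Edge i j}) :
    ∀ i ∈ Vstar, ybar i = y i := by
  obtain ⟨U, hUcard, hU⟩ := hunalt
  rintro i hi
  obtain ⟨-, hii, hiV'⟩ := hVstar ▸ hi
  have hUV' : ∀ j ∈ U, j ∈ V' := fun j hj =>
    hV' ▸ ⟨U, fun a ha b hb => by rw [hEdge, hU a ha, hU b hb], hUcard, hj⟩
  obtain ⟨t, htU, htcard⟩ := Finset.exists_subset_card_eq hUcard
  set e := t.orderEmbOfFin htcard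
  have hperp : ∀ k, ⟪ybar i - y i, y (e k)⟫ = 0 := fun k => by
    have hek : e k ∈ U := htU (t.orderEmbOfFin_mem htcard k)
    have := (hEdge i (e k)).1 (hiV' _ (hUV' _ hek))
    rw [hU _ hek] at this
    rw [inner_sub_left, this, sub_self]
  have hspan : y i ∈ span ℝ (range (y ∘ e)) :=
    A.mem_span_codewords e (isUnit_iff_ne_zero.2 (hA e e.injective)) x y hy i
  have hyi : y i ∈ (ℝ ∙ (ybar i - y i))ᗮ :=
    span_le.2 (range_subset_iff.2 fun k => mem_orthogonal_singleton_iff_inner_right.2 (hperp k))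
      hspan
  exact eq_of_inner_self_eq_of_inner_sub_eq_zero ((hEdge i i).1 hii)
    (mem_orthogonal_singleton_iff_inner_right.1 hyi)

/-- In the syndrome-graph decoding setting, with y = A x for A
having all (N-T)×(N-T) submatrices nonsingular, and at least N-T received
vectors unaltered, every vertex in V* has its received vector unaltered. -/
theorem stmt_11 (N T N₀ : ℕ) (hTN : T ≤ N)
    (A : Matrix (Fin N) (Fin (N - T)) ℝ)
    (hA : ∀ e : Fin (N - T) → Fin N, Function.Injective e →
      (Matrix.of fun i j : Fin (N - T) => A (e i) j).det ≠ 0)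
    (x : Fin (N - T) → EuclideanSpace ℝ (Fin N₀))
    (y ybar : Fin N → EuclideanSpace ℝ (Fin N₀))
    (hy : ∀ i, y i = ∑ j, A i j • x j)
    (hunalt : ∃ U : Finset (Fin N), N - T ≤ U.card ∧ ∀ i ∈ U, ybar i = y i)
    -- syndrome graph: Edge i j (allowing i = j) iff inner products agree
    (Edge : Fin N → Fin N → Prop)
    (hEdge : ∀ i j, Edge i j ↔ ⟪ybar i, ybar j⟫ = ⟪y i, y j⟫)
    -- V': vertices with self-loops contained in a clique of size ≥ N-T
    (V' : Set (Fin N))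
    (hV' : V' = {i : Fin N | ∃ s : Finset (Fin N),
      (∀ a ∈ s, ∀ b ∈ s, Edge a b) ∧ N - T ≤ s.card ∧ i ∈ s})
    -- V*: vertices of V' joined (with self-loop) to all of V'
    (Vstar : Set (Fin N))
    (hVstar : Vstar = {i ∈ V' | Edge i i ∧ ∀ j ∈ V', Edge i j}) :
    ∀ i ∈ Vstar, ybar i = y i :=
  stmt_11_general N T N₀ A hA x y ybar hy hunalt Edge hEdge V' hV' Vstar hVstar
end

section
/- Min-cut lower bound for the modified information flow graph: in the information flow graph of a distributed storage system where each new node keeps incoming links only from a set of at least d − F trusted predecessors and a data collector keeps links to at least k − F trusted nodes, the min-cut from the source to each data collector is at least Σ_{i=0}^{k−F−1} min{(d−F−i)β, α}. -/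
open scoped Classical ENNReal

/-- Nodes of the information flow graph of a distributed storage system with
at most `L` storage nodes: the source, an in/out pair for each storage node,
and a data collector. -/
inductive DSSNode (L : ℕ) where
  | src : DSSNode L
  | inn : Fin L → DSSNode L
  | out : Fin L → DSSNode L
  | dc : DSSNode L
  deriving DecidableEq

instance (L : ℕ) : Fintype (DSSNode L) :=
  Fintype.ofSurjective
    (fun x : Option (Option (Fin L ⊕ Fin L)) =>
      match x with
      | none => DSSNode.src
      | some none => DSSNode.dc
      | some (some (Sum.inl i)) => DSSNode.inn i
      | some (some (Sum.inr i)) => DSSNode.out i)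
    (by intro v; cases v with
        | src => exact ⟨none, rfl⟩
        | dc => exact ⟨some none, rfl⟩
        | inn i => exact ⟨some (some (Sum.inl i)), rfl⟩
        | out i => exact ⟨some (some (Sum.inr i)), rfl⟩)

/-- Edge capacities of the information flow graph: the source feeds the `N`
initial nodes with infinite-capacity edges; each storage node's in-node is
joined to its out-node with capacity `α`; each later node `j` (with `N ≤ j`)
receives capacity-`β` edges from the out-nodes of its trusted predecessors
`pred j`; the data collector has infinite-capacity edges from the out-nodes
of the trusted nodes `W` it contacts. All other capacities are 0. -/
noncomputable def dssCap (L N : ℕ) (α β : ℝ≥0∞) (pred : Fin L → Finset (Fin L))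
    (W : Finset (Fin L)) : DSSNode L → DSSNode L → ℝ≥0∞ := fun u v =>
  match u, v with
  | DSSNode.src, DSSNode.inn i => if (i : ℕ) < N then ⊤ else 0
  | DSSNode.inn i, DSSNode.out j => if i = j then α else 0
  | DSSNode.out i, DSSNode.inn j => if N ≤ (j : ℕ) ∧ i ∈ pred j then β else 0
  | DSSNode.out i, DSSNode.dc => if i ∈ W then ⊤ else 0
  | _, _ => 0

/-- Capacity of the cut `(U, Uᶜ)`: total capacity of edges from `U` to `Uᶜ`. -/
noncomputable def dssCutCap (L N : ℕ) (α β : ℝ≥0∞) (pred : Fin L → Finset (Fin L))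
    (W : Finset (Fin L)) (U : Set (DSSNode L)) : ℝ≥0∞ :=
  ∑ u : DSSNode L, ∑ v : DSSNode L,
    if u ∈ U ∧ v ∉ U then dssCap L N α β pred W u v else 0

/-!
The cut capacity is the sum, over the nodes `x ∉ U`, of the capacity entering `x` from `U`.
If some out-node contacted by the collector lies in `U`, an infinite edge crosses the cut.
Otherwise list the storage nodes whose out-node lies outside `U` increasingly,
`b₀ < b₁ < ⋯`; there are at least `k - F` of them. For `b_t` either the storage edge
`inn → out` crosses the cut (capacity `α`), or its in-node lies outside `U` and receives `⊤`
from the source (if `b_t` is initial) or `β` from each of its at least `d - F` predecessors,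
all but at most `t` of which (those among `b₀, …, b_{t-1}`) have their out-node in `U`.
-/

open Finset

section CutInflow

variable {V : Type*} [Fintype V] (c : V → V → ℝ≥0∞) (U : Set V)

noncomputable def cutInflow (x : V) : ℝ≥0∞ :=
  ∑ u, if u ∈ U ∧ x ∉ U then c u x else 0

theorem sum_cutInflow_le (s : Finset V) :
    ∑ x ∈ s, cutInflow c U x ≤ ∑ u, ∑ v, if u ∈ U ∧ v ∉ U then c u v else 0 := by
  rw [Finset.sum_comm]
  exact sum_le_sum_of_subset (subset_univ s)

variable {c U}

theorem le_cutInflow {u x : V} (hu : u ∈ U) (hx : x ∉ U) : c u x ≤ cutInflow c U x :=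
  calc c u x = if u ∈ U ∧ x ∉ U then c u x else 0 := (if_pos ⟨hu, hx⟩).symm
    _ ≤ cutInflow c U x :=
      single_le_sum (f := fun u => if u ∈ U ∧ x ∉ U then c u x else 0)
        (fun _ _ => zero_le) (mem_univ u)

theorem card_mul_le_cutInflow {s : Finset V} {b : ℝ≥0∞} {x : V}
    (hs : ∀ u ∈ s, u ∈ U ∧ b ≤ c u x) (hx : x ∉ U) : #s * b ≤ cutInflow c U x :=
  calc (#s : ℝ≥0∞) * b = ∑ _u ∈ s, b := by rw [sum_const, nsmul_eq_mul]
    _ ≤ ∑ u ∈ s, if u ∈ U ∧ x ∉ U then c u x else 0 :=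
      sum_le_sum fun u hu => by simpa [(hs u hu).1, hx] using (hs u hu).2
    _ ≤ cutInflow c U x := sum_le_sum_of_subset (subset_univ s)

end CutInflow

theorem Finset.card_filter_lt_orderEmbOfFin {α : Type*} [LinearOrder α] (s : Finset α)
    {k : ℕ} (h : #s = k) (t : Fin k) : #{x ∈ s | x < s.orderEmbOfFin h t} = t := by
  set e := s.orderEmbOfFin h
  calc #{x ∈ s | x < e t} = #{x ∈ univ.image e | x < e t} := by
        rw [s.image_orderEmbOfFin_univ h]
    _ = t := by
        rw [filter_image, card_image_of_injective _ e.injective]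
        simp only [OrderEmbedding.lt_iff_lt, filter_gt_eq_Iio, Fin.card_Iio]

theorem Finset.sum_orderEmbOfFin {α M : Type*} [LinearOrder α] [AddCommMonoid M]
    (s : Finset α) {k : ℕ} (h : #s = k) (f : α → M) :
    ∑ t, f (s.orderEmbOfFin h t) = ∑ j ∈ s, f j := by
  rw [← sum_image (s.orderEmbOfFin h).injective.injOn, s.image_orderEmbOfFin_univ h]

theorem Finset.card_le_card_filter_add_card_filter_lt {α : Type*} [LinearOrder α]
    {P B : Finset α} {p : α → Prop} [DecidablePred p] {j : α} (hP : ∀ i ∈ P, i < j)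
    (hB : ∀ i ∈ P, ¬ p i → i ∈ B) : #P ≤ #{i ∈ P | p i} + #{i ∈ B | i < j} := by
  rw [← card_filter_add_card_filter_not p]
  gcongr
  intro i hi
  rw [mem_filter] at hi ⊢
  exact ⟨hB i hi.1 hi.2, hP i hi.1⟩

namespace DSSNode

variable {L : ℕ}

/-- The node of the pair of `j` through which the cut is entered when `out j ∉ U`. -/
noncomputable def entry (U : Set (DSSNode L)) (j : Fin L) : DSSNode L :=
  if inn j ∈ U then out j else inn j

theorem entry_injective (U : Set (DSSNode L)) : Function.Injective (entry U) := by
  intro i j h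
  unfold entry at h
  split_ifs at h <;> cases h <;> rfl

end DSSNode

open DSSNode

section Cut

variable {L N : ℕ} {α β : ℝ≥0∞} {pred : Fin L → Finset (Fin L)} {W : Finset (Fin L)}
  {U : Set (DSSNode L)}

theorem dssCutCap_eq_top_of_out_mem {i : Fin L} (hiW : i ∈ W) (hiU : out i ∈ U)
    (hdc : dc ∉ U) : dssCutCap L N α β pred W U = ⊤ := by
  refine top_le_iff.1 ?_
  calc ⊤ = dssCap L N α β pred W (out i) dc := by simp [dssCap, hiW]
    _ ≤ cutInflow (dssCap L N α β pred W) U dc := le_cutInflow hiU hdc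
    _ = ∑ x ∈ {dc}, cutInflow (dssCap L N α β pred W) U x := (sum_singleton _ _).symm
    _ ≤ dssCutCap L N α β pred W U := sum_cutInflow_le _ U _

theorem sum_cutInflow_entry_le (B : Finset (Fin L)) :
    ∑ j ∈ B, cutInflow (dssCap L N α β pred W) U (entry U j) ≤
      dssCutCap L N α β pred W U := by
  rw [← sum_image fun i _ j _ h => entry_injective U h]
  exact sum_cutInflow_le _ _ _

theorem min_le_cutInflow_entry {j : Fin L} {n : ℕ} (hsrc : src ∈ U) (hj : out j ∉ U)
    (hn : N ≤ (j : ℕ) → n ≤ #{i ∈ pred j | out i ∈ U}) :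
    min (n * β) α ≤ cutInflow (dssCap L N α β pred W) U (entry U j) := by
  by_cases hinn : inn j ∈ U
  · simpa [entry, hinn, dssCap] using
      (min_le_right _ _).trans (le_cutInflow (c := dssCap L N α β pred W) hinn hj)
  rw [entry, if_neg hinn]
  by_cases hjN : (j : ℕ) < N
  · have := le_cutInflow (c := dssCap L N α β pred W) hsrc hinn
    simp only [dssCap, if_pos hjN, top_le_iff] at this
    simp [this]
  have hjN : N ≤ (j : ℕ) := le_of_not_gt hjN
  refine (min_le_left _ _).trans ?_
  calc (n : ℝ≥0∞) * β ≤ #(({i ∈ pred j | out i ∈ U}).image out) * β := by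
        rw [card_image_of_injective _ fun _ _ h => out.inj h]
        gcongr
        exact hn hjN
    _ ≤ _ := card_mul_le_cutInflow (fun u hu => by
        obtain ⟨i, hi, rfl⟩ := mem_image.1 hu
        rw [mem_filter] at hi
        exact ⟨hi.2, by simp [dssCap, hjN, hi.1]⟩) hinn

end Cut

theorem stmt_18_general (L N d k F : ℕ) (α β : ℝ≥0∞)
    (pred : Fin L → Finset (Fin L))
    (hpred : ∀ j : Fin L, N ≤ (j : ℕ) →
      (∀ i ∈ pred j, (i : ℕ) < (j : ℕ)) ∧ d - F ≤ (pred j).card)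
    (W : Finset (Fin L)) (hW : k - F ≤ W.card)
    (U : Set (DSSNode L)) (hsrc : DSSNode.src ∈ U) (hdc : DSSNode.dc ∉ U) :
    ∑ i ∈ Finset.range (k - F), min (((d - F - i : ℕ) : ℝ≥0∞) * β) α ≤
      dssCutCap L N α β pred W U := by
  by_cases hWU : ∃ i ∈ W, out i ∈ U
  · obtain ⟨i, hiW, hiU⟩ := hWU
    rw [dssCutCap_eq_top_of_out_mem hiW hiU hdc]
    exact le_top
  push Not at hWU
  set B : Finset (Fin L) := {i | out i ∉ U}
  have hkB : k - F ≤ #B := hW.trans (card_le_card fun i hi => by simpa [B] using hWU i hi)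
  set e := B.orderEmbOfFin rfl
  have hentry (t : Fin #B) : min (((d - F - t : ℕ) : ℝ≥0∞) * β) α ≤
      cutInflow (dssCap L N α β pred W) U (entry U (e t)) := by
    have heB : e t ∈ B := B.orderEmbOfFin_mem rfl t
    refine min_le_cutInflow_entry hsrc (by simpa [B] using heB) fun hN => ?_
    obtain ⟨hpred_lt, hpred_card⟩ := hpred _ hN
    have hsplit := card_le_card_filter_add_card_filter_lt (j := e t) (p := fun i => out i ∈ U)
      (B := B) hpred_lt (fun i _ hi => by simpa [B] using hi)
    rw [B.card_filter_lt_orderEmbOfFin rfl t] at hsplit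
    omega
  calc ∑ i ∈ range (k - F), min (((d - F - i : ℕ) : ℝ≥0∞) * β) α
      ≤ ∑ i ∈ range #B, min (((d - F - i : ℕ) : ℝ≥0∞) * β) α :=
        sum_le_sum_of_subset (range_subset_range.2 hkB)
    _ = ∑ t : Fin #B, min (((d - F - t : ℕ) : ℝ≥0∞) * β) α := (Fin.sum_univ_eq_sum_range _ _).symm
    _ ≤ ∑ t : Fin #B, cutInflow (dssCap L N α β pred W) U (entry U (e t)) :=
        sum_le_sum fun t _ => hentry t
    _ = ∑ j ∈ B, cutInflow (dssCap L N α β pred W) U (entry U j) :=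
        B.sum_orderEmbOfFin rfl fun j => cutInflow (dssCap L N α β pred W) U (entry U j)
    _ ≤ dssCutCap L N α β pred W U := sum_cutInflow_entry_le B

/-- Min-cut lower bound for the modified information flow graph:
if each new node keeps incoming links only from a set of at least d − F
trusted predecessors, and the data collector keeps links to at least k − F
trusted nodes, then every source–DC cut has capacity at least
Σ_{i=0}^{k−F−1} min{(d−F−i)β, α}. -/
theorem stmt_18 (L N d k F : ℕ) (α β : ℝ≥0∞)
    (hβ : β ≠ 0) (hβα : β ≤ α)
    (hNL : N ≤ L) (hN : 1 ≤ N) (hFd : F < d) (hFk : F < k) (hkd : k ≤ d)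
    (pred : Fin L → Finset (Fin L))
    (hpred : ∀ j : Fin L, N ≤ (j : ℕ) →
      (∀ i ∈ pred j, (i : ℕ) < (j : ℕ)) ∧ d - F ≤ (pred j).card)
    (W : Finset (Fin L)) (hW : k - F ≤ W.card)
    (U : Set (DSSNode L)) (hsrc : DSSNode.src ∈ U) (hdc : DSSNode.dc ∉ U) :
    ∑ i ∈ Finset.range (k - F), min (((d - F - i : ℕ) : ℝ≥0∞) * β) α ≤
      dssCutCap L N α β pred W U :=
  stmt_18_general L N d k F α β pred hpred W hW U hsrc hdc
end
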